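/- arXiv:2508.12896 — 2 statements merged into one kernel-verified Lean document; each statement's English description precedes it below -/
import Mathlib

section
/- For A(t) = N0·e^{-αt} + Umax·(1 - e^{-βt}) with α, β, N0, Umax > 0 and α > β, the function A is nondecreasing on [0, ∞) if and only if βUmax ≥ αN0. -/
/-!
`A' t = β Umax e^{-βt} - α N0 e^{-αt}`. A function monotone on `[0, ∞)` has nonnegative
right derivative at `0`, which is `β Umax - α N0`. Conversely, for `t ≥ 0` and `β ≤ α` we have
`e^{-αt} ≤ e^{-βt}`, so `α N0 ≤ β Umax` makes `A'` nonnegative on `[0, ∞)`.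
-/

open Real

noncomputable def A (N0 α Umax β t : ℝ) : ℝ :=
  N0 * Real.exp (-α * t) + Umax * (1 - Real.exp (-β * t))

open Set Filter Topology

lemma accPt_principal_Ici (a : ℝ) : AccPt a (𝓟 (Ici a)) := by
  rw [accPt_principal_iff_nhdsWithin, Ici_sdiff_left]
  infer_instance

lemma HasDerivAt.nonneg_of_monotoneOn_Ici {f : ℝ → ℝ} {f' a : ℝ} (hd : HasDerivAt f f' a)
    (hf : MonotoneOn f (Ici a)) : 0 ≤ f' :=
  hd.hasDerivWithinAt.nonneg_of_monotoneOn (accPt_principal_Ici a) hf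

lemma mul_exp_neg_mul_le_mul_exp_neg_mul {a b c d t : ℝ} (ht : 0 ≤ t) (hba : b ≤ a)
    (hc : 0 ≤ c) (hcd : c ≤ d) : c * exp (-a * t) ≤ d * exp (-b * t) :=
  mul_le_mul hcd (exp_le_exp.mpr (by nlinarith)) (exp_pos _).le (hc.trans hcd)

lemma hasDerivAt_A (N0 α Umax β t : ℝ) :
    HasDerivAt (A N0 α Umax β) (β * Umax * exp (-β * t) - α * N0 * exp (-α * t)) t := by
  have hdecay := (((hasDerivAt_id t).const_mul (-α)).exp).const_mul N0
  have hgrowth := ((((hasDerivAt_id t).const_mul (-β)).exp).const_sub 1).const_mul Umax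
  exact (hdecay.add hgrowth).congr_deriv (by simp only [id, mul_one]; ring)

theorem stmt2_general (N0 α Umax β : ℝ) (hα : 0 < α) (hN0 : 0 < N0)
    (hαβ : α > β) :
    MonotoneOn (A N0 α Umax β) (Set.Ici (0 : ℝ)) ↔ β * Umax ≥ α * N0 := by
  constructor
  · intro hmono
    simpa using (hasDerivAt_A N0 α Umax β 0).nonneg_of_monotoneOn_Ici hmono
  · intro hge
    refine monotoneOn_of_hasDerivWithinAt_nonneg (convex_Ici 0)
      (fun t _ ↦ (hasDerivAt_A N0 α Umax β t).continuousAt.continuousWithinAt)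
      (fun t _ ↦ (hasDerivAt_A N0 α Umax β t).hasDerivWithinAt) fun t ht ↦ ?_
    rw [interior_Ici] at ht
    exact sub_nonneg.mpr
      (mul_exp_neg_mul_le_mul_exp_neg_mul (le_of_lt ht) hαβ.le (by positivity) hge)

theorem stmt2 (N0 α Umax β : ℝ) (hα : 0 < α) (hβ : 0 < β) (hN0 : 0 < N0)
    (hU : 0 < Umax) (hαβ : α > β) :
    MonotoneOn (A N0 α Umax β) (Set.Ici (0 : ℝ)) ↔ β * Umax ≥ α * N0 :=
  stmt2_general N0 α Umax β hα hN0 hαβ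
end

section
/- Suppose two parameter vectors (α, β, N0, Umax) and (α', β', N0', Umax'), all entries positive with α ≠ β, α' ≠ β', N0 ≠ Umax, and α > β, produce the same function A(t) = N0·e^{-αt} + Umax·(1 - e^{-βt}) = N0'·e^{-α't} + Umax'·(1 - e^{-β't}) for all t ≥ 0. Then (α, β, N0, Umax) = (α', β', N0', Umax'). -/
/-!
`A` is an exponential polynomial: `Umax · e^{0·t} + N0 · e^{-αt} - Umax · e^{-βt}`.
By Dedekind's independence of characters, applied to the characters `t ↦ e^{ct}` of the
additive monoid `ℝ≥0`, such a function on `[0, ∞)` determines its coefficient at every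
frequency `c`. Comparing coefficients at `0` gives `Umax = Umax'`; at `-β` the coefficient
is `-Umax < 0`, and the only negative coefficient on the other side sits at `-β'`, so
`β = β'`; then the positive coefficient `N0` at `-α` forces `α = α'` and `N0 = N0'`.
-/

open Real

open NNReal Finsupp

noncomputable def expCharacter (c : ℝ) : Multiplicative ℝ≥0 →* ℝ where
  toFun t := exp (c * t.toAdd)
  map_one' := by simp
  map_mul' s t := by simp [mul_add, exp_add]

lemma expCharacter_injective : Function.Injective expCharacter := fun c d h => by
  simpa [expCharacter] using congr($h (.ofAdd 1))

lemma linearIndependent_exp_mul_nnreal :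
    LinearIndependent ℝ (fun (c : ℝ) (t : ℝ≥0) => exp (c * t)) :=
  (linearIndependent_monoidHom (Multiplicative ℝ≥0) ℝ).comp expCharacter expCharacter_injective

/-- `adoptionCoeffs N0 α Umax β c` is the coefficient of `e^{ct}` in `A N0 α Umax β t`. -/
noncomputable def adoptionCoeffs (N0 α Umax β : ℝ) : ℝ →₀ ℝ :=
  single 0 Umax + single (-α) N0 + single (-β) (-Umax)

lemma adoptionCoeffs_apply (N0 α Umax β c : ℝ) :
    adoptionCoeffs N0 α Umax β c =
      (if 0 = c then Umax else 0) + (if -α = c then N0 else 0) - (if -β = c then Umax else 0) := by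
  simp only [adoptionCoeffs, coe_add, Pi.add_apply, single_apply, single_neg, coe_neg,
    Pi.neg_apply]
  ring

lemma A_eq_linearCombination (N0 α Umax β : ℝ) :
    (fun t : ℝ≥0 => A N0 α Umax β t) =
      linearCombination ℝ (fun (c : ℝ) (t : ℝ≥0) => exp (c * t)) (adoptionCoeffs N0 α Umax β) := by
  ext t
  simp only [A, adoptionCoeffs, single_neg, map_add, map_neg, linearCombination_single, neg_mul,
    zero_mul, exp_zero, Pi.add_apply, Pi.neg_apply, Pi.smul_apply, smul_eq_mul, mul_one]
  ring

lemma adoptionCoeffs_eq_of_A_eq {N0 α Umax β N0' α' Umax' β' : ℝ}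
    (h : ∀ t : ℝ, 0 ≤ t → A N0 α Umax β t = A N0' α' Umax' β' t) :
    adoptionCoeffs N0 α Umax β = adoptionCoeffs N0' α' Umax' β' := by
  refine linearIndependent_exp_mul_nnreal.finsuppLinearCombination_injective ?_
  rw [← A_eq_linearCombination, ← A_eq_linearCombination]
  exact funext fun t => h t t.2

theorem stmt9_general (α β N0 Umax α' β' N0' Umax' : ℝ)
    (hα : 0 < α) (hβ : 0 < β) (hN0 : 0 < N0) (hU : 0 < Umax)
    (hα' : 0 < α') (hβ' : 0 < β') (hN0' : 0 < N0')
    (hne : α ≠ β)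
    (heq : ∀ t : ℝ, 0 ≤ t → A N0 α Umax β t = A N0' α' Umax' β' t) :
    α = α' ∧ β = β' ∧ N0 = N0' ∧ Umax = Umax' := by
  have hcoeffs := adoptionCoeffs_eq_of_A_eq heq
  have h0 := congr($hcoeffs 0)
  have hb := congr($hcoeffs (-β))
  have ha := congr($hcoeffs (-α))
  simp only [adoptionCoeffs_apply, zero_eq_neg, neg_eq_zero, neg_inj, hα.ne', hβ.ne', hα'.ne',
    hβ'.ne', hne, hne.symm, if_true, if_false, add_zero, zero_add, sub_zero] at h0 hb ha
  obtain rfl : Umax = Umax' := h0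
  obtain rfl : β' = β := by
    by_contra h
    rw [if_neg h] at hb
    split_ifs at hb <;> linarith
  obtain rfl : α' = α := by
    by_contra h
    rw [if_neg h, if_neg hne.symm] at ha
    linarith
  simp only [if_true, if_neg hne.symm, sub_zero] at ha
  exact ⟨rfl, rfl, ha, rfl⟩

theorem stmt9 (α β N0 Umax α' β' N0' Umax' : ℝ)
    (hα : 0 < α) (hβ : 0 < β) (hN0 : 0 < N0) (hU : 0 < Umax)
    (hα' : 0 < α') (hβ' : 0 < β') (hN0' : 0 < N0') (hU' : 0 < Umax')
    (hne : α ≠ β) (hne' : α' ≠ β') (hNU : N0 ≠ Umax) (hord : α > β)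
    (heq : ∀ t : ℝ, 0 ≤ t → A N0 α Umax β t = A N0' α' Umax' β' t) :
    α = α' ∧ β = β' ∧ N0 = N0' ∧ Umax = Umax' :=
  stmt9_general α β N0 Umax α' β' N0' Umax' hα hβ hN0 hU hα' hβ' hN0' hne heq
end
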